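/- Subformula property for synthesis in the bidirectional simply typed lambda calculus: for every typing context Γ, term e, and simple type B, if Γ ⊢ e ⇒ B is derivable, then B is a subformula of some type occurring in Γ or a subformula of some type annotation occurring in e. -/
import Mathlib


/-- Simple types: `unit` and function types. -/
inductive Ty : Type
  | unit : Ty
  | arr : Ty → Ty → Ty
deriving DecidableEq

/-- Terms (de Bruijn indices): variables, λ-abstraction, application,
    the unit term `()`, and type annotations `(e : A)`. -/
inductive Tm : Type
  | var : Nat → Tm
  | lam : Tm → Tm
  | app : Tm → Tm → Tm
  | unit : Tm
  | anno : Tm → Ty → Tm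
deriving DecidableEq

/-- Type assignment system `Γ ⊢ e : A`.  Contexts are lists of types,
    indexed by de Bruijn variables. -/
inductive Assign : List Ty → Tm → Ty → Prop
  | var {Γ : List Ty} {n : Nat} {A : Ty} :
      Γ[n]? = some A → Assign Γ (.var n) A
  | anno {Γ e A} :
      Assign Γ e A → Assign Γ (.anno e A) A
  | unit {Γ} : Assign Γ .unit .unit
  | lam {Γ e A₁ A₂} :
      Assign (A₁ :: Γ) e A₂ → Assign Γ (.lam e) (.arr A₁ A₂)
  | app {Γ e₁ e₂ A B} :
      Assign Γ e₁ (.arr A B) → Assign Γ e₂ A → Assign Γ (.app e₁ e₂) B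

mutual
  /-- Synthesis judgment `Γ ⊢ e ⇒ A`. -/
  inductive Syn : List Ty → Tm → Ty → Prop
    | var {Γ : List Ty} {n : Nat} {A : Ty} :
        Γ[n]? = some A → Syn Γ (.var n) A
    | anno {Γ e A} :
        Chk Γ e A → Syn Γ (.anno e A) A
    | app {Γ e₁ e₂ A B} :
        Syn Γ e₁ (.arr A B) → Chk Γ e₂ A → Syn Γ (.app e₁ e₂) B

  /-- Checking judgment `Γ ⊢ e ⇐ A`. -/
  inductive Chk : List Ty → Tm → Ty → Prop
    | sub {Γ e A B} :
        Syn Γ e A → A = B → Chk Γ e B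
    | unit {Γ} : Chk Γ .unit .unit
    | lam {Γ e A₁ A₂} :
        Chk (A₁ :: Γ) e A₂ → Chk Γ (.lam e) (.arr A₁ A₂)
end

/-- The subformula relation on simple types: the reflexive-transitive closure
    of "A₁ is a subformula of A₁ → A₂" and "A₂ is a subformula of A₁ → A₂". -/
inductive Subformula : Ty → Ty → Prop
  | refl (A : Ty) : Subformula A A
  | arrL {A B₁ B₂ : Ty} : Subformula A B₁ → Subformula A (.arr B₁ B₂)
  | arrR {A B₁ B₂ : Ty} : Subformula A B₂ → Subformula A (.arr B₁ B₂)

/-- `AnnoIn C e`: the type `C` occurs as a type annotation in `e`,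
    i.e. `(e' : C)` is a subterm of `e` for some `e'`. -/
def AnnoIn (C : Ty) : Tm → Prop
  | .var _ => False
  | .lam e => AnnoIn C e
  | .app e₁ e₂ => AnnoIn C e₁ ∨ AnnoIn C e₂
  | .unit => False
  | .anno e A => C = A ∨ AnnoIn C e


theorem Subformula.trans {A B C : Ty} (h1 : Subformula A B) (h2 : Subformula B C) :
    Subformula A C := by
  induction h2 with
  | refl => exact h1
  | arrL _ ih => exact .arrL ih
  | arrR _ ih => exact .arrR ih

/-- Subformula property for synthesis: a synthesized type is a subformula of
    a type in the context or of a type annotation in the term. -/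
theorem subformula_property (Γ : List Ty) (e : Tm) (B : Ty) (h : Syn Γ e B) :
    (∃ A ∈ Γ, Subformula B A) ∨ (∃ C : Ty, AnnoIn C e ∧ Subformula B C) := by
  induction h using Syn.rec (motive_2 := fun _ _ _ _ => True) with
  | var h =>
    obtain ⟨hn, rfl⟩ := List.getElem?_eq_some_iff.mp h
    exact .inl ⟨_, List.getElem_mem hn, .refl _⟩
  | anno _ _ => exact .inr ⟨_, .inl rfl, .refl _⟩
  | app _ _ ih _ =>
    rcases ih with ⟨A, hA, hs⟩ | ⟨C, hC, hs⟩
    · exact .inl ⟨A, hA, (Subformula.arrR (.refl _)).trans hs⟩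
    · exact .inr ⟨C, .inl hC, (Subformula.arrR (.refl _)).trans hs⟩
  | sub _ _ _ => trivial
  | unit => trivial
  | lam _ _ => trivial
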